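/- arXiv:2005.02738 — 2 statements merged into one kernel-verified Lean document; each statement's English description precedes it below -/
import Mathlib

section
/- In a flow network with integer capacities and integer (possibly negative on residual edges) costs, among all maximum flows there exists an integer-valued maximum flow of minimum cost; i.e., the minimum of the linear cost function over the set of maximum flows is attained at an integer point. -/
open Finset

/-- A feasible flow on a finite directed graph with source `s`, sink `t`, and
natural-number capacities `c`. -/
def FlowFeasible {V : Type*} [Fintype V] (s t : V) (c : V → V → ℕ)
    (f : V → V → ℝ) : Prop :=
  (∀ u v, 0 ≤ f u v ∧ f u v ≤ (c u v : ℝ)) ∧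
  ∀ v, v ≠ s → v ≠ t → (∑ u, f u v) = (∑ w, f v w)

/-- The value of a flow: net flow out of the source. -/
def flowValue {V : Type*} [Fintype V] (s : V) (f : V → V → ℝ) : ℝ :=
  (∑ w, f s w) - (∑ u, f u s)

/-- The cost of a flow with respect to integer edge costs `w`. -/
def flowCost {V : Type*} [Fintype V] (w : V → V → ℤ) (f : V → V → ℝ) : ℝ :=
  ∑ u, ∑ v, (w u v : ℝ) * f u v

/-!
Collapsing source and sink into a single vertex turns feasible flows into circulations of a
multigraph whose edges are the pairs `(u, v)`. If all net inflows of `x` are integers, no vertex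
meets exactly one edge on which `x` is fractional, so the fractional edges are at least as many
as their endpoints; as net inflows sum to zero, a dimension count yields a nonzero circulation
`d` supported on them. Take a cost-minimal feasible flow with the fewest fractional entries: it
can move along `±d` inside the integer box around it, so `d` costs nothing, and moving along `d`
until an entry turns integral contradicts minimality. Thus every integer cost has an integral
minimizer. For the penalized cost `w - M • value`, with `M` larger than the spread of all
possible costs, a minimizer must have the (integral) maximum value, so it is a maximum flow of
minimum cost.
-/

open AddSubgroup

section Rounding

variable {E : Type*} [Fintype E]

noncomputable def fracSupport (x : E → ℝ) : Finset E := {e | x e ∉ zmultiples 1}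

theorem floor_lt_and_lt_ceil_of_notMem_zmultiples {a : ℝ} (ha : a ∉ zmultiples 1) :
    (⌊a⌋ : ℝ) < a ∧ a < ⌈a⌉ := by
  have ha' : a ∉ Set.range ((↑) : ℤ → ℝ) := by
    rintro ⟨n, rfl⟩
    exact ha (intCast_mem_zmultiples_one n)
  exact ⟨Int.floor_lt_self_iff.mpr ha', (Int.le_ceil a).lt_of_ne fun h => ha' ⟨⌈a⌉, h.symm⟩⟩

theorem exists_pos_fracSupport_add_smul_ssubset {x d : E → ℝ} (hd : d ≠ 0)
    (hsupp : ∀ e, d e ≠ 0 → e ∈ fracSupport x) :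
    ∃ τ : ℝ, 0 < τ ∧ (∀ e, ⌊x e⌋ ≤ (x + τ • d) e ∧ (x + τ • d) e ≤ ⌈x e⌉) ∧
      fracSupport (x + τ • d) ⊂ fracSupport x := by
  classical
  set S : Finset E := {e | d e ≠ 0}
  have hS : S.Nonempty := by
    obtain ⟨e, he⟩ := Function.ne_iff.mp hd
    exact ⟨e, by simpa [S] using he⟩
  have hfrac : ∀ e ∈ S, (⌊x e⌋ : ℝ) < x e ∧ x e < ⌈x e⌉ := fun e he =>
    floor_lt_and_lt_ceil_of_notMem_zmultiples (mem_filter.mp (hsupp e (mem_filter.mp he).2)).2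
  -- `hit e` is the time at which `x e + τ * d e` reaches the integer `r e`
  let r (e : E) : ℤ := if 0 < d e then ⌈x e⌉ else ⌊x e⌋
  let hit (e : E) : ℝ := (r e - x e) / d e
  have hhit : ∀ e ∈ S, hit e * d e = r e - x e := fun e he =>
    div_mul_cancel₀ _ (mem_filter.mp he).2
  have hpos : ∀ e ∈ S, 0 < hit e := by
    intro e he
    have := hfrac e he
    rcases lt_or_gt_of_ne (mem_filter.mp he).2 with hneg | hpos
    · exact div_pos_of_neg_of_neg (by simp only [r, if_neg hneg.not_gt]; linarith) hneg
    · exact div_pos (by simp only [r, if_pos hpos]; linarith) hpos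
  have hbox : ∀ e ∈ S, ∀ τ, 0 ≤ τ → τ ≤ hit e →
      ⌊x e⌋ ≤ x e + τ * d e ∧ x e + τ * d e ≤ ⌈x e⌉ := by
    intro e he τ h0 h1
    have := hhit e he
    have := hfrac e he
    rcases lt_or_gt_of_ne (mem_filter.mp he).2 with hneg | hpos
    · simp only [r, if_neg hneg.not_gt] at *
      constructor <;> nlinarith
    · simp only [r, if_pos hpos] at *
      constructor <;> nlinarith
  obtain ⟨e₀, he₀, hmin⟩ := S.exists_min_image hit hS
  refine ⟨hit e₀, hpos e₀ he₀, fun e => ?_, ?_⟩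
  · by_cases he : e ∈ S
    · exact hbox e he _ (hpos e₀ he₀).le (hmin e he)
    · have : d e = 0 := by simpa [S] using he
      simp [this, Int.floor_le, Int.le_ceil]
  · refine (ssubset_iff_of_subset fun e he => ?_).mpr ⟨e₀, hsupp e₀ (mem_filter.mp he₀).2, ?_⟩
    · by_cases hde : d e = 0
      · simpa [fracSupport, hde] using he
      · exact hsupp e hde
    · simp [fracSupport, hhit e₀ he₀]

end Rounding

namespace Multigraph

variable {E W : Type*} [DecidableEq W] (tail head : E → W)

def netInflow [Fintype E] : (E → ℝ) →ₗ[ℝ] W → ℝ where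
  toFun x w := ∑ e with head e = w, x e - ∑ e with tail e = w, x e
  map_add' x y := by ext w; simp only [Pi.add_apply, sum_add_distrib]; ring
  map_smul' a x := by ext w; simp [mul_sum, mul_sub]

theorem sum_netInflow [Fintype E] [Fintype W] (x : E → ℝ) :
    ∑ w, netInflow tail head x w = 0 := by
  simp [netInflow, sum_sub_distrib, sum_fiberwise]

def degree (F : Finset E) (w : W) : ℕ := #{e ∈ F | tail e = w} + #{e ∈ F | head e = w}

theorem sum_degree [Fintype W] (F : Finset E) : ∑ w, degree tail head F w = 2 * #F := by
  simp only [degree, sum_add_distrib,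
    ← card_eq_sum_card_fiberwise fun _ _ => mem_coe.mpr (mem_univ _)]
  ring

theorem netInflow_eq_zero_of_degree_eq_zero [Fintype E] {F : Finset E} {d : E → ℝ}
    (hd : ∀ e, d e ≠ 0 → e ∈ F) {w : W} (hw : degree tail head F w = 0) :
    netInflow tail head d w = 0 := by
  have hoff : ∀ e ∈ F, tail e ≠ w ∧ head e ≠ w := by
    intro e he
    simp only [degree, Nat.add_eq_zero_iff, card_eq_zero, filter_eq_empty_iff] at hw
    exact ⟨hw.1 he, hw.2 he⟩
  have hzero : ∀ e, (tail e = w ∨ head e = w) → d e = 0 := fun e he =>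
    not_not.mp fun hde => by have := hoff e (hd e hde); tauto
  simp only [netInflow, LinearMap.coe_mk, AddHom.coe_mk]
  rw [sum_eq_zero fun e he => hzero e (Or.inr (mem_filter.mp he).2),
    sum_eq_zero fun e he => hzero e (Or.inl (mem_filter.mp he).2), sub_zero]

theorem card_le_of_degree_ne_one [Fintype W] {F : Finset E}
    (hF : ∀ w, degree tail head F w ≠ 1) : #{w | degree tail head F w ≠ 0} ≤ #F := by
  have : 2 * #{w | degree tail head F w ≠ 0} ≤ 2 * #F := calc
    2 * #{w | degree tail head F w ≠ 0} = ∑ w with degree tail head F w ≠ 0, 2 := by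
      rw [sum_const, smul_eq_mul, mul_comm]
    _ ≤ ∑ w with degree tail head F w ≠ 0, degree tail head F w :=
      sum_le_sum fun w hw => by have := hF w; have := (mem_filter.mp hw).2; omega
    _ = 2 * #F := by rw [sum_filter_ne_zero, sum_degree]
  omega

theorem exists_circulation_of_degree_ne_one [Fintype E] [Fintype W] {F : Finset E}
    (hne : F.Nonempty) (hF : ∀ w, degree tail head F w ≠ 1) :
    ∃ d : E → ℝ, d ≠ 0 ∧ (∀ e, d e ≠ 0 → e ∈ F) ∧ netInflow tail head d = 0 := by
  classical
  set U : Finset W := {w | degree tail head F w ≠ 0}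
  obtain ⟨u₀, hu₀⟩ : U.Nonempty := by
    obtain ⟨e, he⟩ := hne
    refine ⟨tail e, mem_filter.mpr ⟨mem_univ _, ?_⟩⟩
    have : 0 < #{e' ∈ F | tail e' = tail e} := card_pos.mpr ⟨e, by simp [he]⟩
    simp only [degree]; omega
  let ext : (F → ℝ) →ₗ[ℝ] E → ℝ :=
    LinearMap.pi fun e => if h : e ∈ F then LinearMap.proj ⟨e, h⟩ else 0
  have hext : ∀ y e, ext y e ≠ 0 → e ∈ F := fun y e h => by
    by_contra he; simp [ext, he] at h
  -- Net inflows sum to zero, so testing them on `U.erase u₀` suffices: fewer than `#F` conditions.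
  let L := LinearMap.funLeft ℝ ℝ (Subtype.val : U.erase u₀ → W) ∘ₗ netInflow tail head ∘ₗ ext
  have hdim : Module.finrank ℝ (U.erase u₀ → ℝ) < Module.finrank ℝ (F → ℝ) := by
    simp only [Module.finrank_fintype_fun_eq_card, Fintype.card_coe, card_erase_of_mem hu₀]
    have : #U ≤ #F := card_le_of_degree_ne_one tail head hF
    have := card_pos.mpr ⟨u₀, hu₀⟩
    omega
  obtain ⟨y, hyL, hy⟩ := (Submodule.ne_bot_iff _).mp (L.ker_ne_bot_of_finrank_lt hdim)
  have hoff : ∀ w ≠ u₀, netInflow tail head (ext y) w = 0 := by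
    intro w hw
    by_cases hwU : w ∈ U
    · exact congrFun (LinearMap.mem_ker.mp hyL) ⟨w, mem_erase.mpr ⟨hw, hwU⟩⟩
    · exact netInflow_eq_zero_of_degree_eq_zero tail head (hext y) (by simpa [U] using hwU)
  refine ⟨ext y, fun h => hy ?_, hext y, funext fun w => ?_⟩
  · ext ⟨e, he⟩
    simpa [ext, he] using congrFun h e
  · by_cases hw : w = u₀
    · subst hw
      rw [← sum_eq_single_of_mem w (mem_univ w) fun v _ hv => hoff v hv, sum_netInflow]
      rfl
    · exact hoff w hw

theorem degree_fracSupport_ne_one [Fintype E] (x : E → ℝ) {w : W}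
    (hx : netInflow tail head x w ∈ zmultiples 1) : degree tail head (fracSupport x) w ≠ 1 := by
  classical
  let q := QuotientAddGroup.mk' (zmultiples (1 : ℝ))
  have hq : ∀ (p : E → Prop) [DecidablePred p],
      q (∑ e with p e, x e) = ∑ e ∈ fracSupport x with p e, q (x e) := by
    intro p _
    rw [map_sum]
    refine (sum_subset (fun e he => ?_) fun e he hF => ?_).symm
    · simp_all [fracSupport]
    · simpa [fracSupport, q, (mem_filter.mp he).2] using hF
  have h0 : q (netInflow tail head x w) = 0 := (QuotientAddGroup.eq_zero_iff _).mpr hx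
  simp only [netInflow, LinearMap.coe_mk, AddHom.coe_mk, map_sub, hq] at h0
  have hint : ∀ e ∈ fracSupport x, q (x e) ≠ 0 := fun e he h =>
    (mem_filter.mp he).2 ((QuotientAddGroup.eq_zero_iff _).mp h)
  intro h1
  rcases Nat.add_eq_one_iff.mp h1 with ⟨hT, hH⟩ | ⟨hT, hH⟩
  · obtain ⟨e, he⟩ := card_eq_one.mp hH
    rw [card_eq_zero.mp hT, he, sum_empty, sum_singleton, sub_zero] at h0
    exact hint e (mem_filter.mp (he ▸ mem_singleton_self e)).1 h0
  · obtain ⟨e, he⟩ := card_eq_one.mp hT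
    rw [card_eq_zero.mp hH, he, sum_empty, sum_singleton, zero_sub, neg_eq_zero] at h0
    exact hint e (mem_filter.mp (he ▸ mem_singleton_self e)).1 h0

theorem exists_circulation_on_fracSupport [Fintype E] [Fintype W] (x : E → ℝ)
    (hx : ∀ w, netInflow tail head x w ∈ zmultiples 1) (hfrac : (fracSupport x).Nonempty) :
    ∃ d : E → ℝ, d ≠ 0 ∧ (∀ e, d e ≠ 0 → e ∈ fracSupport x) ∧ netInflow tail head d = 0 :=
  exists_circulation_of_degree_ne_one tail head hfrac fun w =>
    degree_fracSupport_ne_one tail head x (hx w)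

end Multigraph

open Multigraph

section Collapse

variable {V : Type*} [Fintype V] [DecidableEq V]

def collapse (s t v : V) : Option V := if v = s ∨ v = t then none else some v

abbrev collapsedInflow (s t : V) : (V × V → ℝ) →ₗ[ℝ] Option V → ℝ :=
  netInflow (collapse s t ∘ Prod.fst) (collapse s t ∘ Prod.snd)

theorem collapsedInflow_some (s t : V) (f : V → V → ℝ) (v : V) :
    collapsedInflow s t (Function.uncurry f) (some v) =
      if v = s ∨ v = t then 0 else ∑ u, f u v - ∑ w, f v w := by
  have hc : ∀ u, collapse s t u = some v ↔ u = v ∧ ¬ (v = s ∨ v = t) := by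
    intro u; unfold collapse; split_ifs <;> aesop
  simp only [netInflow, LinearMap.coe_mk, AddHom.coe_mk, Function.comp_apply, hc, sum_filter,
    Fintype.sum_prod_type]
  by_cases hv : v = s ∨ v = t <;> simp [hv]

theorem conserves_iff_collapsedInflow_eq_zero (s t : V) (f : V → V → ℝ) :
    (∀ v, v ≠ s → v ≠ t → ∑ u, f u v = ∑ w, f v w) ↔
      collapsedInflow s t (Function.uncurry f) = 0 := by
  constructor
  · intro h
    have hsome : ∀ v, collapsedInflow s t (Function.uncurry f) (some v) = 0 := fun v => by
      rw [collapsedInflow_some]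
      split_ifs with hv
      · rfl
      · push Not at hv
        rw [h v hv.1 hv.2, sub_self]
    funext o
    cases o with
    | some v => exact hsome v
    | none =>
      have := sum_netInflow (collapse s t ∘ Prod.fst) (collapse s t ∘ Prod.snd)
        (Function.uncurry f)
      simpa [Fintype.sum_option, hsome] using this
  · intro h v hs ht
    have := collapsedInflow_some s t f v
    rw [h, if_neg (by tauto)] at this
    exact sub_eq_zero.mp this.symm

theorem FlowFeasible.curry_of_rounding {s t : V} {c : V → V → ℕ} {f : V → V → ℝ}
    (hf : FlowFeasible s t c f) {y : V × V → ℝ}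
    (hbox : ∀ e, ⌊Function.uncurry f e⌋ ≤ y e ∧ y e ≤ ⌈Function.uncurry f e⌉)
    (hy : collapsedInflow s t y = 0) :
    FlowFeasible s t c (Function.curry y) := by
  refine ⟨fun u v => ⟨?_, ?_⟩, (conserves_iff_collapsedInflow_eq_zero s t _).mpr (by simpa)⟩
  · have : (0 : ℝ) ≤ ⌊f u v⌋ := by exact_mod_cast Int.floor_nonneg.mpr (hf.1 u v).1
    exact this.trans (hbox (u, v)).1
  · have : (⌈f u v⌉ : ℝ) ≤ c u v := by
      exact_mod_cast Int.ceil_le.mpr (by exact_mod_cast (hf.1 u v).2)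
    exact (hbox (u, v)).2.trans this

end Collapse

section Flow

variable {V : Type*} [Fintype V]

theorem flowFeasible_zero (s t : V) (c : V → V → ℕ) : FlowFeasible s t c 0 :=
  ⟨fun u v => ⟨le_rfl, Nat.cast_nonneg _⟩, fun _ _ _ => by simp⟩

theorem isCompact_setOf_flowFeasible (s t : V) (c : V → V → ℕ) :
    IsCompact {f | FlowFeasible s t c f} := by
  refine isCompact_Icc (a := 0) (b := fun u v => (c u v : ℝ)).of_isClosed_subset ?_
    fun f hf => ⟨fun u v => (hf.1 u v).1, fun u v => (hf.1 u v).2⟩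
  simp only [FlowFeasible, Set.ofPred_and, Set.ofPred_forall]
  exact (isClosed_iInter fun u => isClosed_iInter fun v =>
    (isClosed_le continuous_const (continuous_apply_apply u v)).inter
      (isClosed_le (continuous_apply_apply u v) continuous_const)).inter
    (isClosed_iInter fun v => isClosed_iInter fun _ => isClosed_iInter fun _ =>
      isClosed_eq (by fun_prop) (by fun_prop))

theorem continuous_flowCost (w : V → V → ℤ) : Continuous (flowCost w) := by
  unfold flowCost
  fun_prop

theorem flowCost_curry_add_smul (w : V → V → ℤ) (f : V → V → ℝ) (d : V × V → ℝ) (τ : ℝ) :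
    flowCost w (Function.curry (Function.uncurry f + τ • d)) =
      flowCost w f + τ * flowCost w (Function.curry d) := by
  simp only [flowCost, Function.curry, Function.uncurry, Pi.add_apply, Pi.smul_apply, smul_eq_mul,
    mul_add, sum_add_distrib, mul_sum, mul_left_comm]

theorem exists_isMinOn_flowCost_card_fracSupport_lt [DecidableEq V] {s t : V}
    {c : V → V → ℕ} {w : V → V → ℤ} {f : V → V → ℝ} (hf : FlowFeasible s t c f)
    (hfmin : IsMinOn (flowCost w) {g | FlowFeasible s t c g} f)
    (hfrac : (fracSupport (Function.uncurry f)).Nonempty) :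
    ∃ f', FlowFeasible s t c f' ∧ IsMinOn (flowCost w) {g | FlowFeasible s t c g} f' ∧
      #(fracSupport (Function.uncurry f')) < #(fracSupport (Function.uncurry f)) := by
  have hcirc := (conserves_iff_collapsedInflow_eq_zero s t f).mp hf.2
  obtain ⟨d, hd, hdsupp, hdcirc⟩ := exists_circulation_on_fracSupport
    (collapse s t ∘ Prod.fst) (collapse s t ∘ Prod.snd) (Function.uncurry f)
    (fun o => by rw [congrFun hcirc o]; exact zero_mem _) hfrac
  obtain ⟨τ, hτ, hbox, hfewer⟩ := exists_pos_fracSupport_add_smul_ssubset hd hdsupp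
  obtain ⟨σ, hσ, hbox', -⟩ := exists_pos_fracSupport_add_smul_ssubset (neg_ne_zero.mpr hd)
    (by simpa using hdsupp)
  have hfeas := hf.curry_of_rounding hbox
    (by rw [map_add, map_smul, hcirc, hdcirc, smul_zero, add_zero])
  have hfeas' := hf.curry_of_rounding hbox'
    (by rw [map_add, map_smul, map_neg, hcirc, hdcirc, neg_zero, smul_zero, add_zero])
  have hcost : flowCost w (Function.curry d) = 0 := by
    have h₁ := hfmin hfeas
    have h₂ := hfmin hfeas'
    have hneg : flowCost w (Function.curry (-d)) = -flowCost w (Function.curry d) := by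
      simp [flowCost, Function.curry]
    simp only [Set.mem_ofPred_eq, flowCost_curry_add_smul, hneg] at h₁ h₂
    nlinarith
  refine ⟨_, hfeas, fun g hg => ?_, by simpa using card_lt_card hfewer⟩
  simpa [flowCost_curry_add_smul, hcost] using hfmin hg

theorem exists_integral_isMinOn_flowCost (s t : V) (c : V → V → ℕ) (w : V → V → ℤ) :
    ∃ f, FlowFeasible s t c f ∧ (∀ u v, f u v ∈ zmultiples 1) ∧
      IsMinOn (flowCost w) {g | FlowFeasible s t c g} f := by
  classical
  obtain ⟨f₀, hf₀, hmin₀⟩ := (isCompact_setOf_flowFeasible s t c).exists_isMinOn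
    ⟨0, flowFeasible_zero s t c⟩ (continuous_flowCost w).continuousOn
  obtain ⟨f, ⟨hf, hfmin⟩, hfewest⟩ := exists_minimalFor_of_wellFoundedLT
    (fun f => FlowFeasible s t c f ∧ IsMinOn (flowCost w) {g | FlowFeasible s t c g} f)
    (fun f => #(fracSupport (Function.uncurry f))) ⟨f₀, hf₀, hmin₀⟩
  refine ⟨f, hf, fun u v => not_not.mp fun huv => ?_, hfmin⟩
  obtain ⟨f', hf', hf'min, hlt⟩ := exists_isMinOn_flowCost_card_fracSupport_lt hf hfmin
    ⟨(u, v), by simpa [fracSupport] using huv⟩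
  exact hlt.not_ge (hfewest ⟨hf', hf'min⟩ hlt.le)

def sourceWeight [DecidableEq V] (s u v : V) : ℤ :=
  (if u = s then 1 else 0) - (if v = s then 1 else 0)

theorem flowCost_sub_smul_sourceWeight [DecidableEq V] (s : V) (w : V → V → ℤ) (M : ℤ)
    (f : V → V → ℝ) :
    flowCost (w - M • sourceWeight s) f = flowCost w f - M * flowValue s f := by
  simp [flowCost, flowValue, sourceWeight, sub_mul, mul_sub, sum_sub_distrib, mul_sum, ite_mul]

theorem flowCost_neg_sourceWeight [DecidableEq V] (s : V) (f : V → V → ℝ) :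
    flowCost (-sourceWeight s) f = -flowValue s f := by
  simp [flowCost, flowValue, sourceWeight, sub_mul, sum_sub_distrib, ite_mul]

theorem exists_integral_max_flow (s t : V) (c : V → V → ℕ) :
    ∃ f, FlowFeasible s t c f ∧ (∀ u v, f u v ∈ zmultiples 1) ∧
      ∀ g, FlowFeasible s t c g → flowValue s g ≤ flowValue s f := by
  classical
  obtain ⟨f, hf, hfint, hfmin⟩ := exists_integral_isMinOn_flowCost s t c (-sourceWeight s)
  refine ⟨f, hf, hfint, fun g hg => ?_⟩
  simpa only [Set.mem_ofPred_eq, flowCost_neg_sourceWeight, neg_le_neg_iff] using hfmin hg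

theorem abs_flowCost_le {s t : V} {c : V → V → ℕ} (w : V → V → ℤ) {f : V → V → ℝ}
    (hf : FlowFeasible s t c f) : |flowCost w f| ≤ ∑ u, ∑ v, |(w u v : ℝ)| * c u v := calc
  |flowCost w f| ≤ ∑ u, ∑ v, |(w u v : ℝ) * f u v| :=
    (abs_sum_le_sum_abs _ _).trans (sum_le_sum fun u _ => abs_sum_le_sum_abs _ _)
  _ ≤ ∑ u, ∑ v, |(w u v : ℝ)| * c u v := sum_le_sum fun u _ => sum_le_sum fun v _ => by
    rw [abs_mul, abs_of_nonneg (hf.1 u v).1]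
    exact mul_le_mul_of_nonneg_left (hf.1 u v).2 (abs_nonneg _)

theorem flowValue_mem_zmultiples (s : V) {f : V → V → ℝ} (hf : ∀ u v, f u v ∈ zmultiples 1) :
    flowValue s f ∈ zmultiples 1 :=
  sub_mem (sum_mem fun v _ => hf s v) (sum_mem fun u _ => hf u s)

theorem flowValue_le_of_penalized_cost_le {s t : V} {c : V → V → ℕ} {w : V → V → ℤ}
    {f f' : V → V → ℝ} (hf : FlowFeasible s t c f) (hf' : FlowFeasible s t c f')
    (hfint : ∀ u v, f u v ∈ zmultiples 1) (hf'int : ∀ u v, f' u v ∈ zmultiples 1) {M : ℝ}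
    (hM : 2 * ∑ u, ∑ v, |(w u v : ℝ)| * c u v < M)
    (hle : flowCost w f - M * flowValue s f ≤ flowCost w f' - M * flowValue s f') :
    flowValue s f' ≤ flowValue s f := by
  obtain ⟨m, hm⟩ := mem_zmultiples_iff.mp (flowValue_mem_zmultiples s hf'int)
  obtain ⟨n, hn⟩ := mem_zmultiples_iff.mp (flowValue_mem_zmultiples s hfint)
  have hC := (abs_nonneg _).trans (abs_flowCost_le w hf)
  have h₁ := abs_le.mp (abs_flowCost_le w hf)
  have h₂ := abs_le.mp (abs_flowCost_le w hf')
  have hlt : flowValue s f' - flowValue s f < 1 :=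
    lt_of_mul_lt_mul_left (a := M) (by linarith) (by linarith)
  rw [← hm, ← hn] at hlt ⊢
  simp only [zsmul_eq_mul, mul_one] at hlt ⊢
  exact_mod_cast Int.lt_add_one_iff.mp (by exact_mod_cast sub_lt_iff_lt_add'.mp hlt)

end Flow

/-- With integer capacities and integer costs, there exists an integer-valued
maximum flow of minimum cost: the minimum of the cost over the polytope of
maximum flows is attained at an integral point. -/
theorem exists_integral_min_cost_max_flow {V : Type*} [Fintype V] (s t : V)
    (c : V → V → ℕ) (w : V → V → ℤ) :
    ∃ f : V → V → ℝ, FlowFeasible s t c f ∧ (∀ u v, ∃ z : ℤ, f u v = (z : ℝ)) ∧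
      (∀ g, FlowFeasible s t c g → flowValue s g ≤ flowValue s f) ∧
      ∀ g, FlowFeasible s t c g →
        (∀ h, FlowFeasible s t c h → flowValue s h ≤ flowValue s g) →
        flowCost w f ≤ flowCost w g := by
  classical
  set M : ℤ := 2 * ∑ u, ∑ v, |w u v| * c u v + 1
  obtain ⟨f₁, hf₁, hf₁int, hf₁max⟩ := exists_integral_max_flow s t c
  obtain ⟨f, hf, hfint, hfmin⟩ := exists_integral_isMinOn_flowCost s t c (w - M • sourceWeight s)
  have hpen : ∀ g, FlowFeasible s t c g →
      flowCost w f - M * flowValue s f ≤ flowCost w g - M * flowValue s g := fun g hg => by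
    simpa only [Set.mem_ofPred_eq, flowCost_sub_smul_sourceWeight] using hfmin hg
  have hmax : ∀ g, FlowFeasible s t c g → flowValue s g ≤ flowValue s f := fun g hg =>
    (hf₁max g hg).trans <| flowValue_le_of_penalized_cost_le hf hf₁ hfint hf₁int
      (by simp only [M]; push_cast; linarith) (hpen f₁ hf₁)
  refine ⟨f, hf, fun u v => ?_, hmax, fun g hg hgmax => ?_⟩
  · obtain ⟨z, hz⟩ := mem_zmultiples_iff.mp (hfint u v)
    exact ⟨z, by simpa using hz.symm⟩
  · have := hpen g hg
    rw [le_antisymm (hmax g hg) (hgmax f hf)] at this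
    linarith
end

section
/- Let K ≥ 1, α > 0, and suppose relocation costs are zero. In the horizon-K taxi dispatch problem where serving a request at step k incurs artificial cost α·k (k = 0,…,K−1), an optimal solution of the scalarized problem with 0 < γ < 1/(α(K−1)) (interpreting the bound as γ > 0 arbitrary when K = 1) serves, at step 0, the maximum number of requests achievable at step 0 by any feasible dispatch; that is, g-total at step 0 under the optimal solution equals max over feasible x₀ of ∑_i min(d_{i,0} + ∑_j x_{j→i,0} − ∑_k x_{i→k,0}, r_{i,0}). -/
/-!
A dispatch serving more than `xs 0` at step 0 can, by an augmenting-path argument on the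
assignments of drivers to cells, be replaced by one that serves `G > 0` more while leaving no more
idle drivers in any cell. Complete it to a horizon plan that afterwards replays `xs`, trimmed to the
drivers it actually has. The excess `∑ i, (D i - D' i)⁺` of the optimal plan's driver counts over
the follower's starts at `G` and drops by at least what the follower loses in served requests at
each later step, so it loses at most `G` after step 0. Those later requests weigh at most
`1 - γα < 1`, so by Abel summation the follower would beat `xs` unless `G ≤ 0`.
-/

open Finset

/-- Post-relocation driver count in cell `i`, given current counts `D` and a
single-step relocation matrix `xk`. -/
def postStep {n : ℕ} (D : Fin n → ℝ) (xk : Fin n → Fin n → ℝ) (i : Fin n) : ℝ :=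
  D i + (∑ j, xk j i) - (∑ j, xk i j)

/-- Served requests in cell `i` in a single step: the minimum of the
post-relocation driver count and the request count `rk i`. -/
def gStep {n : ℕ} (D : Fin n → ℝ) (xk : Fin n → Fin n → ℝ) (rk : Fin n → ℝ)
    (i : Fin n) : ℝ :=
  min (postStep D xk i) (rk i)

/-- Driver trajectory generated by initial counts `d0`, request counts `r`,
and relocation decisions `x` under the dispatch dynamics. -/
def traj {n : ℕ} (d0 : Fin n → ℝ) (r : ℕ → Fin n → ℝ)
    (x : ℕ → Fin n → Fin n → ℝ) : ℕ → Fin n → ℝ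
  | 0 => d0
  | k + 1 => fun i =>
      postStep (traj d0 r x k) (x k) i - gStep (traj d0 r x k) (x k) (r k) i

/-- Feasibility of a horizon-`K` dispatch plan: nonnegativity, adjacency
constraints, and outflow bounded by the current driver count at every step. -/
def HorizonFeasible {n : ℕ} (K : ℕ) (L : Fin n → Fin n → ℕ)
    (d0 : Fin n → ℝ) (r : ℕ → Fin n → ℝ) (x : ℕ → Fin n → Fin n → ℝ) : Prop :=
  ∀ k < K, ∀ i,
    (∀ j, 0 ≤ x k i j) ∧ (∀ j, L i j = 0 → x k i j = 0) ∧
      (∑ j, x k i j) ≤ traj d0 r x k i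

/-- Scalarized horizon-`K` objective with zero relocation costs: total served
requests minus `γ` times the artificial cost `α·k` per request served at
step `k`. -/
noncomputable def scalarObj {n : ℕ} (K : ℕ) (γ α : ℝ) (d0 : Fin n → ℝ)
    (r : ℕ → Fin n → ℝ) (x : ℕ → Fin n → Fin n → ℝ) : ℝ :=
  (∑ k ∈ Finset.range K, ∑ i, gStep (traj d0 r x k) (x k) (r k) i) -
    γ * (α * ∑ k ∈ Finset.range K,
      (k : ℝ) * ∑ i, gStep (traj d0 r x k) (x k) (r k) i)

section

variable {n : ℕ}

theorem max_sub_max_add_min_sub_min_le (a b c : ℝ) :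
    max (max (a - c) 0 - max (b - c) 0) 0 + (min a c - min b c) ≤ max (a - b) 0 := by
  grind

theorem max_add_sub_le_max_add_sub {u s t : ℝ} (hs : 0 ≤ s) (hsu : s ≤ max u 0) (ht : 0 ≤ t) :
    max (u + t - s) 0 ≤ max u 0 - s + t := by
  grind

theorem sum_range_mul_le_of_antitone {w a : ℕ → ℝ} {G : ℝ} {N : ℕ} (hN : 0 < N)
    (hw : Antitone w) (hwN : 0 ≤ w (N - 1)) (ha : ∀ j ≤ N, ∑ m ∈ range j, a m ≤ G) :
    ∑ m ∈ range N, w m * a m ≤ w 0 * G := by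
  have hby_parts := sum_range_by_parts w a N
  simp only [smul_eq_mul] at hby_parts
  have hlast : w (N - 1) * ∑ m ∈ range N, a m ≤ w (N - 1) * G :=
    mul_le_mul_of_nonneg_left (ha N le_rfl) hwN
  have hsteps : ∑ i ∈ range (N - 1), (w (i + 1) - w i) * G
      ≤ ∑ i ∈ range (N - 1), (w (i + 1) - w i) * ∑ m ∈ range (i + 1), a m :=
    sum_le_sum fun i hi => mul_le_mul_of_nonpos_left (ha _ (by simp at hi; omega))
      (sub_nonpos.2 (hw (Nat.le_succ i)))
  rw [← sum_mul, sum_range_sub] at hsteps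
  linarith

theorem sum_sum_le_of_closed {ι κ : Type*} [Fintype ι] [Fintype κ] {A B : ι → κ → ℝ}
    (S : Finset κ)
    (hA : ∀ i j, 0 ≤ A i j) (hB : ∀ i j, 0 ≤ B i j) (hrow : ∀ i, ∑ j, A i j = ∑ j, B i j)
    (hS : ∀ i p q, p ∈ S → 0 < A i p → 0 < B i q → q ∈ S) :
    ∑ j ∈ S, ∑ i, A i j ≤ ∑ j ∈ S, ∑ i, B i j := by
  rw [sum_comm, sum_comm (f := fun j i => B i j)]
  refine sum_le_sum fun i _ => ?_
  by_cases h : ∃ p ∈ S, 0 < A i p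
  · obtain ⟨p, hp, hAp⟩ := h
    have hBS : ∀ q ∉ S, B i q = 0 := fun q hq =>
      (hB i q).eq_or_lt.elim Eq.symm fun hBq => absurd (hS i p q hp hAp hBq) hq
    calc ∑ j ∈ S, A i j ≤ ∑ j, A i j := sum_le_univ_sum_of_nonneg (hA i)
      _ = ∑ j, B i j := hrow i
      _ = ∑ j ∈ S, B i j := (sum_subset (subset_univ S) fun q _ hq => hBS q hq).symm
  · push Not at h
    exact (sum_nonpos h).trans (sum_nonneg fun j _ => hB i j)

theorem sum_min_le_of_sum_le {ι : Type*} [Fintype ι] [DecidableEq ι] {a b c : ι → ℝ}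
    (S : Finset ι)
    (hS : ∀ j ∈ S, c j ≤ a j) (hSc : ∀ j ∉ S, a j ≤ c j) (htot : ∑ j, b j = ∑ j, a j)
    (hsub : ∑ j ∈ S, a j ≤ ∑ j ∈ S, b j) :
    ∑ j, min (b j) (c j) ≤ ∑ j, min (a j) (c j) := by
  rw [← sum_add_sum_compl S, ← sum_add_sum_compl S (fun j => min (a j) (c j)),
    sum_congr rfl fun j hj => min_eq_right (hS j hj),
    sum_congr rfl fun j hj => min_eq_left (hSc j (mem_compl.1 hj))]
  have hbS : ∑ j ∈ S, min (b j) (c j) ≤ ∑ j ∈ S, c j := sum_le_sum fun j _ => min_le_right _ _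
  have hbSc : ∑ j ∈ Sᶜ, min (b j) (c j) ≤ ∑ j ∈ Sᶜ, b j := sum_le_sum fun j _ => min_le_left _ _
  linarith [sum_add_sum_compl S a, sum_add_sum_compl S b]

def IsDispatch (L : Fin n → Fin n → ℕ) (D : Fin n → ℝ) (x : Fin n → Fin n → ℝ) : Prop :=
  (∀ i j, 0 ≤ x i j) ∧ (∀ i j, L i j = 0 → x i j = 0) ∧ ∀ i, ∑ j, x i j ≤ D i

def leftover (D : Fin n → ℝ) (x : Fin n → Fin n → ℝ) (rk : Fin n → ℝ) (i : Fin n) : ℝ :=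
  postStep D x i - gStep D x rk i

def served (d0 : Fin n → ℝ) (r : ℕ → Fin n → ℝ) (x : ℕ → Fin n → Fin n → ℝ) (k : ℕ) : ℝ :=
  ∑ i, gStep (traj d0 r x k) (x k) (r k) i

def excess (D D' : Fin n → ℝ) : ℝ :=
  ∑ i, max (D i - D' i) 0

theorem traj_succ (d0 : Fin n → ℝ) (r : ℕ → Fin n → ℝ) (x : ℕ → Fin n → Fin n → ℝ) (k : ℕ) :
    traj d0 r x (k + 1) = leftover (traj d0 r x k) (x k) (r k) :=
  rfl

theorem horizonFeasible_iff {K : ℕ} {L : Fin n → Fin n → ℕ} {d0 : Fin n → ℝ}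
    {r : ℕ → Fin n → ℝ} {x : ℕ → Fin n → Fin n → ℝ} :
    HorizonFeasible K L d0 r x ↔ ∀ k < K, IsDispatch L (traj d0 r x k) (x k) := by
  simp only [HorizonFeasible, IsDispatch, forall_and]

theorem scalarObj_eq_sum (K : ℕ) (γ α : ℝ) (d0 : Fin n → ℝ) (r : ℕ → Fin n → ℝ)
    (x : ℕ → Fin n → Fin n → ℝ) :
    scalarObj K γ α d0 r x = ∑ k ∈ range K, (1 - γ * α * k) * served d0 r x k := by
  rw [scalarObj, mul_sum, mul_sum]
  simp only [served, sub_mul, one_mul, sum_sub_distrib]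
  congr 1
  exact sum_congr rfl fun k _ => by ring

theorem leftover_eq_max (D : Fin n → ℝ) (x : Fin n → Fin n → ℝ) (rk : Fin n → ℝ) (i : Fin n) :
    leftover D x rk i = max (postStep D x i - rk i) 0 := by
  simp only [leftover, gStep]
  grind

theorem leftover_nonneg (D : Fin n → ℝ) (x : Fin n → Fin n → ℝ) (rk : Fin n → ℝ) (i : Fin n) :
    0 ≤ leftover D x rk i :=
  (leftover_eq_max D x rk i).symm ▸ le_max_right _ _

theorem sum_postStep (D : Fin n → ℝ) (x : Fin n → Fin n → ℝ) :
    ∑ i, postStep D x i = ∑ i, D i := by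
  simp only [postStep, sum_sub_distrib, sum_add_distrib]
  rw [sum_comm]
  ring

theorem sum_leftover (D : Fin n → ℝ) (x : Fin n → Fin n → ℝ) (rk : Fin n → ℝ) :
    ∑ i, leftover D x rk i = ∑ i, D i - ∑ i, gStep D x rk i := by
  rw [← sum_postStep D x, ← sum_sub_distrib]
  rfl

theorem excess_nonneg (D D' : Fin n → ℝ) : 0 ≤ excess D D' :=
  sum_nonneg fun _ _ => le_max_right _ _

theorem excess_eq_of_le {D D' : Fin n → ℝ} (h : ∀ i, D' i ≤ D i) :
    excess D D' = ∑ i, D i - ∑ i, D' i := by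
  rw [excess, ← sum_sub_distrib]
  exact sum_congr rfl fun i _ => max_eq_left (sub_nonneg.2 (h i))

noncomputable def trimRows (y : Fin n → Fin n → ℝ) (c : Fin n → ℝ) : Fin n → Fin n → ℝ :=
  fun i j => if ∑ j', y i j' ≤ c i then y i j else y i j * (c i / ∑ j', y i j')

section trimRows

variable {y : Fin n → Fin n → ℝ} {c : Fin n → ℝ}

theorem trimRows_le (hy : ∀ i j, 0 ≤ y i j) (hc : ∀ i, 0 ≤ c i) (i j : Fin n) :
    trimRows y c i j ≤ y i j := by
  unfold trimRows
  split_ifs with h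
  · exact le_rfl
  · have hout : 0 < ∑ j', y i j' := (hc i).trans_lt (not_le.1 h)
    exact mul_le_of_le_one_right (hy i j) ((div_le_one hout).2 (not_le.1 h).le)

theorem sum_trimRows (hc : ∀ i, 0 ≤ c i) (i : Fin n) :
    ∑ j, trimRows y c i j = min (∑ j, y i j) (c i) := by
  unfold trimRows
  split_ifs with h
  · exact (min_eq_left h).symm
  · have hout : 0 < ∑ j', y i j' := (hc i).trans_lt (not_le.1 h)
    rw [← sum_mul, min_eq_right (not_le.1 h).le, mul_div_cancel₀ _ hout.ne']

theorem isDispatch_trimRows {L : Fin n → Fin n → ℕ} {D : Fin n → ℝ} (hy : IsDispatch L D y)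
    (hc : ∀ i, 0 ≤ c i) : IsDispatch L c (trimRows y c) := by
  obtain ⟨hpos, hadj, -⟩ := hy
  refine ⟨fun i j => ?_, fun i j hL => ?_, fun i => ?_⟩
  · unfold trimRows
    split_ifs with h
    · exact hpos i j
    · exact mul_nonneg (hpos i j) (div_nonneg (hc i) ((hc i).trans (not_le.1 h).le))
  · unfold trimRows
    split_ifs <;> simp [hadj i j hL]
  · rw [sum_trimRows hc]
    exact min_le_right _ _

end trimRows

-- Trimming the rows of `y` to the follower's supply `D'` loses at most what the leader `D` has
-- in excess, and each unit lost is either carried over as excess or paid for in served requests.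
theorem excess_leftover_add_le {D D' : Fin n → ℝ} {y : Fin n → Fin n → ℝ} (rk : Fin n → ℝ)
    (hy : ∀ i j, 0 ≤ y i j) (hyD : ∀ i, ∑ j, y i j ≤ D i) (hD' : ∀ i, 0 ≤ D' i) :
    excess (leftover D y rk) (leftover D' (trimRows y D') rk)
        + (∑ i, gStep D y rk i - ∑ i, gStep D' (trimRows y D') rk i) ≤ excess D D' := by
  set y' := trimRows y D'
  have hcell : ∀ i, max (leftover D y rk i - leftover D' y' rk i) 0
      + (gStep D y rk i - gStep D' y' rk i)
      ≤ max (D i - D' i) 0 - (∑ j, y i j - ∑ j, y' i j) + (∑ j, y j i - ∑ j, y' j i) := by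
    intro i
    have hout : ∑ j, y i j - ∑ j, y' i j = max (∑ j, y i j - D' i) 0 := by
      rw [sum_trimRows hD']
      grind
    have hin : ∑ j, y' j i ≤ ∑ j, y j i := sum_le_sum fun j _ => trimRows_le hy hD' j i
    have hpost : postStep D y i - postStep D' y' i
        = (D i - D' i) + (∑ j, y j i - ∑ j, y' j i) - (∑ j, y i j - ∑ j, y' i j) := by
      simp only [postStep]
      ring
    have hcap := max_add_sub_le_max_add_sub (u := D i - D' i) (hout ▸ le_max_right _ _)
      (hout ▸ max_le_max (by linarith [hyD i]) le_rfl) (sub_nonneg.2 hin)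
    rw [← hpost] at hcap
    rw [leftover_eq_max, leftover_eq_max]
    unfold gStep
    linarith [max_sub_max_add_min_sub_min_le (postStep D y i) (postStep D' y' i) (rk i)]
  have hflow : ∑ i, (∑ j, y j i - ∑ j, y' j i) = ∑ i, (∑ j, y i j - ∑ j, y' i j) := by
    simp only [sum_sub_distrib]
    rw [sum_comm, sum_comm (f := fun j i => y' j i)]
  calc _ = ∑ i, (max (leftover D y rk i - leftover D' y' rk i) 0
          + (gStep D y rk i - gStep D' y' rk i)) := by
        rw [excess, sum_add_distrib, sum_sub_distrib]
    _ ≤ ∑ i, (max (D i - D' i) 0 - (∑ j, y i j - ∑ j, y' i j) + (∑ j, y j i - ∑ j, y' j i)) :=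
        sum_le_sum fun i _ => hcell i
    _ = excess D D' := by
        rw [sum_add_distrib, sum_sub_distrib, hflow, excess]
        ring

section followPlan

variable (d0 : Fin n → ℝ) (r : ℕ → Fin n → ℝ) (xs : ℕ → Fin n → Fin n → ℝ)
  (z0 : Fin n → Fin n → ℝ)

-- The follower starts with `z0` and afterwards replays the leader `xs`, trimmed to its own supply.
noncomputable def followAux : ℕ → (Fin n → ℝ) × (Fin n → Fin n → ℝ)
  | 0 => (d0, z0)
  | k + 1 =>
    let D := leftover (followAux k).1 (followAux k).2 (r k)
    (D, trimRows (xs (k + 1)) D)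

noncomputable def followPlan (k : ℕ) : Fin n → Fin n → ℝ :=
  (followAux d0 r xs z0 k).2

theorem traj_followPlan (k : ℕ) :
    traj d0 r (followPlan d0 r xs z0) k = (followAux d0 r xs z0 k).1 := by
  induction k with
  | zero => rfl
  | succ k ih => rw [traj_succ, ih]; rfl

theorem followPlan_succ (k : ℕ) :
    followPlan d0 r xs z0 (k + 1)
      = trimRows (xs (k + 1)) (traj d0 r (followPlan d0 r xs z0) (k + 1)) := by
  rw [traj_followPlan]
  rfl

variable {d0 r xs z0} {K : ℕ} {L : Fin n → Fin n → ℕ}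

theorem horizonFeasible_followPlan (hxs : HorizonFeasible K L d0 r xs)
    (hz0 : IsDispatch L d0 z0) : HorizonFeasible K L d0 r (followPlan d0 r xs z0) := by
  rw [horizonFeasible_iff] at hxs ⊢
  rintro (_ | k) hk
  · exact hz0
  · rw [followPlan_succ, traj_succ]
    exact isDispatch_trimRows (hxs (k + 1) hk) (leftover_nonneg _ _ _)

theorem sum_range_served_sub_add_excess_le (hxs : HorizonFeasible K L d0 r xs) :
    ∀ j < K, ∑ m ∈ range j, (served d0 r xs (m + 1) - served d0 r (followPlan d0 r xs z0) (m + 1))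
        + excess (traj d0 r xs (j + 1)) (traj d0 r (followPlan d0 r xs z0) (j + 1))
      ≤ excess (traj d0 r xs 1) (traj d0 r (followPlan d0 r xs z0) 1) := by
  intro j
  induction j with
  | zero => simp
  | succ j ih =>
    intro hj
    obtain ⟨hpos, -, hout⟩ := horizonFeasible_iff.1 hxs (j + 1) hj
    have hstep := excess_leftover_add_le (D' := traj d0 r (followPlan d0 r xs z0) (j + 1))
      (r (j + 1)) hpos hout (leftover_nonneg _ _ _)
    rw [← followPlan_succ, ← traj_succ, ← traj_succ] at hstep
    rw [sum_range_succ]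
    have := ih (by omega)
    simp only [served] at *
    linarith

end followPlan

theorem served_le_of_leftover_le {K : ℕ} (hK : 1 ≤ K) {L : Fin n → Fin n → ℕ} {d0 : Fin n → ℝ}
    {r : ℕ → Fin n → ℝ} {γ α : ℝ} (hα : 0 < α) (hγ0 : 0 < γ)
    (hγ : K = 1 ∨ γ < 1 / (α * ((K : ℝ) - 1))) {xs : ℕ → Fin n → Fin n → ℝ}
    (hxs : HorizonFeasible K L d0 r xs)
    (hopt : ∀ x, HorizonFeasible K L d0 r x → scalarObj K γ α d0 r x ≤ scalarObj K γ α d0 r xs)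
    {z0 : Fin n → Fin n → ℝ} (hz0 : IsDispatch L d0 z0)
    (hdom : ∀ i, leftover d0 z0 (r 0) i ≤ leftover d0 (xs 0) (r 0) i) :
    ∑ i, gStep d0 z0 (r 0) i ≤ ∑ i, gStep d0 (xs 0) (r 0) i := by
  set zp := followPlan d0 r xs z0
  change served d0 r zp 0 ≤ served d0 r xs 0
  have hgain : excess (traj d0 r xs 1) (traj d0 r zp 1) = served d0 r zp 0 - served d0 r xs 0 := by
    rw [excess_eq_of_le (D := traj d0 r xs 1) (D' := traj d0 r zp 1) hdom, traj_succ,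
      traj_succ, sum_leftover, sum_leftover]
    simp only [served, traj]
    ring
  obtain ⟨N, rfl⟩ : ∃ N, K = N + 1 := ⟨K - 1, by omega⟩
  have hobj := hopt zp (horizonFeasible_followPlan hxs hz0)
  rw [scalarObj_eq_sum, scalarObj_eq_sum, sum_range_succ', sum_range_succ'] at hobj
  simp only [Nat.cast_zero, mul_zero, sub_zero, one_mul] at hobj
  rcases Nat.eq_zero_or_pos N with rfl | hN
  · simpa using hobj
  have hγα : 0 < γ * α := mul_pos hγ0 hα
  have hγN : γ * α * N < 1 := by
    have h := hγ.resolve_left (by omega)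
    rw [Nat.cast_add_one, add_sub_cancel_right, lt_div_iff₀ (by positivity)] at h
    linarith
  have hlater := sum_range_mul_le_of_antitone (w := fun m => 1 - γ * α * ((m + 1 : ℕ) : ℝ))
    (a := fun m => served d0 r xs (m + 1) - served d0 r zp (m + 1))
    (G := excess (traj d0 r xs 1) (traj d0 r zp 1)) hN
    (fun a b hab => sub_le_sub_left (mul_le_mul_of_nonneg_left
      (Nat.cast_le.2 (by omega)) hγα.le) 1)
    (by rw [Nat.sub_add_cancel hN]; linarith)
    (fun j hj => by
      have := sum_range_served_sub_add_excess_le (z0 := z0) hxs j (by omega)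
      linarith [excess_nonneg (traj d0 r xs (j + 1)) (traj d0 r zp (j + 1))])
  simp only [mul_sub, sum_sub_distrib, zero_add, Nat.cast_one, mul_one] at hlater
  have hγαG : γ * α * (served d0 r zp 0 - served d0 r xs 0) ≤ 0 := by
    rw [← hgain]
    linarith
  linarith [nonpos_of_mul_nonpos_right hγαG hγα]

section assignment

variable {L : Fin n → Fin n → ℕ} {D rk : Fin n → ℝ} {A : Fin n → Fin n → ℝ}

variable (L) in
-- Row `i` says where the drivers of cell `i` end up, staying put included.
def IsAssignment (D : Fin n → ℝ) (A : Fin n → Fin n → ℝ) : Prop :=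
  (∀ i j, 0 ≤ A i j) ∧ (∀ i j, i ≠ j → L i j = 0 → A i j = 0) ∧ ∀ i, ∑ j, A i j = D i

variable (L) in
-- The cells an oversupplied cell can pass a driver to: if `p` is reachable and row `i` sends some
-- of its drivers to `p`, then row `i` could send them to any `q` it may serve instead.
inductive Reachable (A : Fin n → Fin n → ℝ) (rk : Fin n → ℝ) : Fin n → Prop
  | base {p : Fin n} : rk p < ∑ i, A i p → Reachable A rk p
  | step {p i q : Fin n} : Reachable A rk p → 0 < A i p → (i = q ∨ L i q ≠ 0) → Reachable A rk q

-- Cut argument: the reachable cells are saturated, and every assignment puts at least as many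
-- drivers on them, hence at most as many on the unsaturated rest.
theorem sum_min_le_of_forall_reachable {B : Fin n → Fin n → ℝ} (hA : IsAssignment L D A)
    (hB : IsAssignment L D B) (h : ∀ q, Reachable L A rk q → rk q ≤ ∑ i, A i q) :
    ∑ j, min (∑ i, B i j) (rk j) ≤ ∑ j, min (∑ i, A i j) (rk j) := by
  classical
  refine sum_min_le_of_sum_le (univ.filter (Reachable L A rk))
    (fun j hj => h j (mem_filter.1 hj).2)
    (fun j hj => not_lt.1 fun hlt => hj (mem_filter.2 ⟨mem_univ _, .base hlt⟩)) ?_ ?_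
  · rw [sum_comm, sum_comm (f := fun j i => A i j)]
    simp only [hA.2.2, hB.2.2]
  · refine sum_sum_le_of_closed _ hA.1 hB.1 (fun i => by rw [hA.2.2, hB.2.2]) ?_
    intro i p q hp hAp hBq
    simp only [mem_filter, mem_univ, true_and] at hp ⊢
    refine .step hp hAp (or_iff_not_imp_left.2 fun hiq hL => ?_)
    exact hBq.ne' (hB.2.1 i q hiq hL)

theorem exists_shift_of_reachable (hA : IsAssignment L D A) {p : Fin n}
    (hp : Reachable L A rk p) :
    ∃ o, rk o < ∑ i, A i o ∧ ∃ Δ : Fin n → Fin n → ℝ, (∀ i, ∑ j, Δ i j = 0) ∧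
      (∀ j, ∑ i, Δ i j = (if j = p then 1 else 0) - (if j = o then 1 else 0)) ∧
      (∀ i j, i ≠ j → L i j = 0 → Δ i j = 0) ∧ (∀ i j, Δ i j < 0 → 0 < A i j) := by
  induction hp with
  | @base p hp =>
    exact ⟨p, hp, 0, fun i => by simp, fun j => by simp, fun _ _ _ _ => rfl,
      fun _ _ h => absurd h (lt_irrefl 0)⟩
  | @step p i q _ hAip hiq ih =>
    obtain ⟨o, ho, Δ, hrow, hcol, hsupp, hneg⟩ := ih
    refine ⟨o, ho, fun a b => Δ a b + (if a = i ∧ b = q then 1 else 0)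
      - (if a = i ∧ b = p then 1 else 0), fun a => ?_, fun b => ?_, fun a b hab hL => ?_,
      fun a b h => ?_⟩
    · simp only [sum_sub_distrib, sum_add_distrib, hrow, ite_and]
      simp
    · simp only [sum_sub_distrib, sum_add_distrib, hcol, ite_and]
      simp only [sum_ite_eq', mem_univ, if_true]
      split_ifs <;> ring
    · have hq : ¬(a = i ∧ b = q) := by
        rintro ⟨rfl, rfl⟩
        exact hiq.elim hab (· hL)
      have hp : ¬(a = i ∧ b = p) := by
        rintro ⟨rfl, rfl⟩
        exact hAip.ne' (hA.2.1 a b hab hL)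
      simp [hsupp a b hab hL, hq, hp]
    · by_cases hab : a = i ∧ b = p
      · obtain ⟨rfl, rfl⟩ := hab
        exact hAip
      · refine hneg a b ?_
        have : (0 : ℝ) ≤ if a = i ∧ b = q then 1 else 0 := by split_ifs <;> norm_num
        simp only [hab, if_false, sub_zero] at h
        linarith

theorem exists_assignment_lt_of_reachable (hA : IsAssignment L D A) {q : Fin n}
    (hq : Reachable L A rk q) (hdef : ∑ i, A i q < rk q) :
    ∃ Z, IsAssignment L D Z ∧ ∑ j, min (∑ i, A i j) (rk j) < ∑ j, min (∑ i, Z i j) (rk j) ∧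
      ∀ j, max (∑ i, Z i j - rk j) 0 ≤ max (∑ i, A i j - rk j) 0 := by
  obtain ⟨o, ho, Δ, hrow, hcol, hsupp, hneg⟩ := exists_shift_of_reachable hA hq
  have hoq : o ≠ q := by
    rintro rfl
    linarith
  have hsmall : ∀ {c : ℝ}, 0 < c → ∀ᶠ ε in nhdsWithin (0 : ℝ) (Set.Ioi 0), ε ≤ c :=
    fun hc => (eventually_le_nhds hc).filter_mono nhdsWithin_le_nhds
  have hentry : ∀ i j, ∀ᶠ ε in nhdsWithin (0 : ℝ) (Set.Ioi 0), 0 ≤ A i j + ε * Δ i j := by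
    intro i j
    rcases le_or_gt 0 (Δ i j) with hΔ | hΔ
    · filter_upwards [self_mem_nhdsWithin] with ε hε
      exact add_nonneg (hA.1 i j) (mul_nonneg (le_of_lt hε) hΔ)
    · filter_upwards [hsmall (div_pos (hneg i j hΔ) (neg_pos.2 hΔ))] with ε hε
      have := (le_div_iff₀ (neg_pos.2 hΔ)).1 hε
      linarith
  obtain ⟨ε, hεA, hεq, hεo, hε : 0 < ε⟩ :=
    ((Filter.eventually_all.2 fun i => Filter.eventually_all.2 (hentry i)).and
      ((hsmall (sub_pos.2 hdef)).and ((hsmall (sub_pos.2 ho)).and self_mem_nhdsWithin))).exists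
  set Z := fun i j => A i j + ε * Δ i j
  have hZcol : ∀ j, ∑ i, Z i j
      = ∑ i, A i j + ε * ((if j = q then 1 else 0) - (if j = o then 1 else 0)) := fun j => by
    simp only [Z, sum_add_distrib, ← mul_sum, hcol]
  have hcell : ∀ j, min (∑ i, Z i j) (rk j) = min (∑ i, A i j) (rk j) + if j = q then ε else 0 := by
    intro j
    rw [hZcol]
    rcases eq_or_ne j q with rfl | hjq
    · rw [if_pos rfl, if_neg hoq.symm, if_pos rfl, sub_zero, mul_one, min_eq_left (by linarith),
        min_eq_left hdef.le]
    rcases eq_or_ne j o with rfl | hjo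
    · rw [if_pos rfl, if_neg hjq, if_neg hjq, zero_sub, mul_neg_one, add_zero,
        min_eq_right (by linarith), min_eq_right ho.le]
    · simp [hjq, hjo]
  refine ⟨Z, ⟨hεA, fun i j hij hL => ?_, fun i => ?_⟩, ?_, fun j => ?_⟩
  · simp [Z, hA.2.1 i j hij hL, hsupp i j hij hL]
  · simp only [Z, sum_add_distrib, ← mul_sum, hrow, mul_zero, add_zero, hA.2.2]
  · simp only [hcell, sum_add_distrib, sum_ite_eq', mem_univ, if_true]
    linarith
  · rw [hZcol]
    rcases eq_or_ne j q with rfl | hjq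
    · rw [if_pos rfl, if_neg hoq.symm, sub_zero, mul_one]
      exact (max_eq_right (by linarith)).trans_le (le_max_right _ _)
    · refine max_le_max ?_ le_rfl
      have : (0 : ℝ) ≤ if j = o then 1 else 0 := by split_ifs <;> norm_num
      simp only [if_neg hjq]
      nlinarith

theorem exists_assignment_lt_of_lt {B : Fin n → Fin n → ℝ} (hA : IsAssignment L D A)
    (hB : IsAssignment L D B)
    (hlt : ∑ j, min (∑ i, A i j) (rk j) < ∑ j, min (∑ i, B i j) (rk j)) :
    ∃ Z, IsAssignment L D Z ∧ ∑ j, min (∑ i, A i j) (rk j) < ∑ j, min (∑ i, Z i j) (rk j) ∧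
      ∀ j, max (∑ i, Z i j - rk j) 0 ≤ max (∑ i, A i j - rk j) 0 := by
  by_cases h : ∃ q, Reachable L A rk q ∧ ∑ i, A i q < rk q
  · obtain ⟨q, hq, hdef⟩ := h
    exact exists_assignment_lt_of_reachable hA hq hdef
  · push Not at h
    exact absurd (sum_min_le_of_forall_reachable hA hB h) (not_le.2 hlt)

end assignment

section addDiag

variable {L : Fin n → Fin n → ℕ} {D : Fin n → ℝ}

def addDiag (x : Fin n → Fin n → ℝ) (u : Fin n → ℝ) : Fin n → Fin n → ℝ :=
  fun i j => x i j + if i = j then u i else 0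

theorem sum_addDiag (x : Fin n → Fin n → ℝ) (u : Fin n → ℝ) (i : Fin n) :
    ∑ j, addDiag x u i j = ∑ j, x i j + u i := by
  simp [addDiag, sum_add_distrib]

theorem postStep_addDiag (D : Fin n → ℝ) (x : Fin n → Fin n → ℝ) (u : Fin n → ℝ) :
    postStep D (addDiag x u) = postStep D x := by
  funext i
  simp only [postStep, addDiag, sum_add_distrib, sum_ite_eq, sum_ite_eq', mem_univ, if_true]
  ring

theorem postStep_eq_sum_of_isAssignment {A : Fin n → Fin n → ℝ} (hA : IsAssignment L D A)
    (j : Fin n) : postStep D A j = ∑ i, A i j := by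
  simp [postStep, hA.2.2]

theorem isAssignment_addDiag {x : Fin n → Fin n → ℝ} (hx : IsDispatch L D x) :
    IsAssignment L D (addDiag x fun i => D i - ∑ j, x i j) := by
  obtain ⟨hpos, hadj, hout⟩ := hx
  refine ⟨fun i j => ?_, fun i j hij hL => ?_, fun i => ?_⟩
  · unfold addDiag
    split_ifs
    · linarith [hpos i j, hout i]
    · linarith [hpos i j]
  · simp [addDiag, hij, hadj i j hL]
  · rw [sum_addDiag]
    ring

theorem isDispatch_addDiag {A : Fin n → Fin n → ℝ} (hA : IsAssignment L D A) :
    IsDispatch L D (addDiag A fun i => -A i i) := by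
  obtain ⟨hpos, hadj, hrow⟩ := hA
  refine ⟨fun i j => ?_, fun i j hL => ?_, fun i => ?_⟩
  · unfold addDiag
    split_ifs with h
    · simp [h]
    · simpa using hpos i j
  · unfold addDiag
    split_ifs with h
    · simp [h]
    · simp [hadj i j h hL]
  · rw [sum_addDiag, hrow]
    linarith [hpos i i]

-- Pass to assignments (the diagonal holds the drivers that stay put), improve there, and drop
-- the diagonal again.
theorem exists_isDispatch_lt_leftover_le {rk : Fin n → ℝ} {x x' : Fin n → Fin n → ℝ}
    (hx : IsDispatch L D x) (hx' : IsDispatch L D x')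
    (hlt : ∑ i, gStep D x rk i < ∑ i, gStep D x' rk i) :
    ∃ z, IsDispatch L D z ∧ ∑ i, gStep D x rk i < ∑ i, gStep D z rk i ∧
      ∀ i, leftover D z rk i ≤ leftover D x rk i := by
  have hA := isAssignment_addDiag hx
  have hB := isAssignment_addDiag hx'
  have hxA : ∀ j, postStep D x j = ∑ i, addDiag x (fun i => D i - ∑ j, x i j) i j := fun j => by
    rw [← postStep_addDiag D x, postStep_eq_sum_of_isAssignment hA]
  have hxB : ∀ j, postStep D x' j = ∑ i, addDiag x' (fun i => D i - ∑ j, x' i j) i j := fun j => by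
    rw [← postStep_addDiag D x', postStep_eq_sum_of_isAssignment hB]
  obtain ⟨Z, hZ, hZlt, hZdom⟩ := exists_assignment_lt_of_lt (rk := rk) hA hB
    (by simpa only [gStep, hxA, hxB] using hlt)
  have hzZ : ∀ j, postStep D (addDiag Z fun i => -Z i i) j = ∑ i, Z i j := fun j => by
    rw [postStep_addDiag, postStep_eq_sum_of_isAssignment hZ]
  exact ⟨_, isDispatch_addDiag hZ, by simpa only [gStep, hxA, hzZ] using hZlt,
    fun j => by simpa only [leftover_eq_max, hxA, hzZ] using hZdom j⟩

end addDiag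

end

/-- Time-greedy property: with zero relocation costs, `α > 0`, and
`0 < γ < 1/(α(K-1))` (any `γ > 0` when `K = 1`), an optimal solution of the
scalarized horizon-`K` problem serves, at step 0, the maximum number of
requests achievable at step 0 by any feasible single-step dispatch. -/
theorem time_greedy_property {n : ℕ} (K : ℕ) (hK : 1 ≤ K)
    (L : Fin n → Fin n → ℕ) (d0 : Fin n → ℕ) (r : ℕ → Fin n → ℕ)
    (γ α : ℝ) (hα : 0 < α) (hγ0 : 0 < γ)
    (hγ : K = 1 ∨ γ < 1 / (α * ((K : ℝ) - 1)))
    (xs : ℕ → Fin n → Fin n → ℝ)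
    (hfeas : HorizonFeasible K L (fun i => (d0 i : ℝ))
      (fun k i => (r k i : ℝ)) xs)
    (hopt : ∀ x, HorizonFeasible K L (fun i => (d0 i : ℝ))
        (fun k i => (r k i : ℝ)) x →
      scalarObj K γ α (fun i => (d0 i : ℝ)) (fun k i => (r k i : ℝ)) x ≤
      scalarObj K γ α (fun i => (d0 i : ℝ)) (fun k i => (r k i : ℝ)) xs) :
    IsGreatest
      {v : ℝ | ∃ x0 : Fin n → Fin n → ℝ,
        (∀ i j, 0 ≤ x0 i j) ∧ (∀ i j, L i j = 0 → x0 i j = 0) ∧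
        (∀ i, (∑ j, x0 i j) ≤ (d0 i : ℝ)) ∧
        v = ∑ i, min ((d0 i : ℝ) + (∑ j, x0 j i) - (∑ j, x0 i j)) ((r 0 i : ℝ))}
      (∑ i, gStep (fun i => (d0 i : ℝ)) (xs 0) (fun i => (r 0 i : ℝ)) i) := by
  have hxs0 : IsDispatch L (fun i => (d0 i : ℝ)) (xs 0) := horizonFeasible_iff.1 hfeas 0 hK
  refine ⟨⟨xs 0, hxs0.1, hxs0.2.1, hxs0.2.2, rfl⟩, ?_⟩
  rintro v ⟨x0, hpos, hadj, hout, rfl⟩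
  by_contra hlt
  obtain ⟨z0, hz0, hgt, hdom⟩ :=
    exists_isDispatch_lt_leftover_le hxs0 ⟨hpos, hadj, hout⟩ (not_le.1 hlt)
  exact hgt.not_ge (served_le_of_leftover_le hK hα hγ0 hγ hfeas hopt hz0 hdom)
end
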